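/- arXiv:2507.15448 — 10 statements merged into one kernel-verified Lean document; each statement's English description precedes it below -/
import Mathlib

section
/- Let Φ be an n×m matrix over F whose columns span F^n (i.e., Φ : F^m → F^n is surjective). Then the kernel of the ℓ-Galois Gramian Φ^{†_ℓ}Φ : F^m → F^m equals the kernel of Φ : F^m → F^n. -/
open Matrix BigOperators

/-!
If `Φ *ᵥ ·` is onto, then for every `v` the identity `v ⬝ᵥ (Φ *ᵥ z) = (v ᵥ* Φ) ⬝ᵥ z` shows that
`v ᵥ* Φ = Φᵀ *ᵥ v` vanishes only for `v = 0`, so `Φᵀ * Ψ` and `Ψ` have the same kernel.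
The Galois Gramian is of this form with `σ(Φ)` in place of `Φ`, and `σ(Φ)` is still onto because
`σ(Φ) *ᵥ σ(z) = σ(Φ *ᵥ z)` and the Frobenius power `σ` is bijective on a finite field.
-/

namespace Matrix

variable {ι κ R : Type*} [Fintype κ]

theorem vecMul_eq_zero_iff_of_mulVec_surjective [Fintype ι] [CommRing R] {A : Matrix ι κ R}
    (hA : Function.Surjective A.mulVec) {v : ι → R} : v ᵥ* A = 0 ↔ v = 0 := by
  refine ⟨fun hv => dotProduct_eq_zero v fun w => ?_, fun hv => hv ▸ zero_vecMul A⟩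
  obtain ⟨z, rfl⟩ := hA w
  rw [dotProduct_mulVec, hv, zero_dotProduct]

theorem transpose_mul_mulVec_eq_zero_iff {μ : Type*} [Fintype ι] [Fintype μ] [CommRing R]
    {A : Matrix ι κ R} {B : Matrix ι μ R} (hA : Function.Surjective A.mulVec) (x : μ → R) :
    (Aᵀ * B) *ᵥ x = 0 ↔ B *ᵥ x = 0 := by
  rw [← mulVec_mulVec, mulVec_transpose, vecMul_eq_zero_iff_of_mulVec_surjective hA]

theorem mulVec_map_surjective {S : Type*} [Semiring R] [Semiring S] {f : R →+* S}
    (hf : Function.Surjective f) {A : Matrix ι κ R} (hA : Function.Surjective A.mulVec) :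
    Function.Surjective (A.map f).mulVec := by
  intro w
  obtain ⟨v, rfl⟩ := hf.comp_left w
  obtain ⟨z, rfl⟩ := hA v
  exact ⟨f ∘ z, funext fun i => (RingHom.map_mulVec f A z i).symm⟩

end Matrix

theorem gramian_ker_general (p e ℓ n m : ℕ) (hp : p.Prime)
    (F : Type) [Field F] [Fintype F] (hcard : Fintype.card F = p ^ e)
    (Φ : Matrix (Fin n) (Fin m) F) (hsurj : Function.Surjective Φ.mulVec) :
    ∀ x : Fin m → F, ((Φ.map fun c => c ^ p ^ ℓ)ᵀ * Φ).mulVec x = 0 ↔ Φ.mulVec x = 0 := by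
  have : Fact p.Prime := ⟨hp⟩
  have : CharP F p := charP_of_card_eq_prime_pow hcard
  have hσ : Function.Surjective (iterateFrobenius F p ℓ) :=
    Finite.surjective_of_injective (iterateFrobenius F p ℓ).injective
  exact transpose_mul_mulVec_eq_zero_iff (mulVec_map_surjective hσ hsurj)

/-- If the columns of `Φ` form a frame for `F^n` (i.e. `Φ.mulVec` is surjective), then
the kernel of the ℓ-Galois Gramian `Φ^{†_ℓ}Φ` equals the kernel of `Φ`. -/
theorem gramian_ker (p e ℓ n m : ℕ) (hp : p.Prime) (he : 1 ≤ e) (hℓ : ℓ ≤ e - 1)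
    (F : Type) [Field F] [Fintype F] (hcard : Fintype.card F = p ^ e)
    (Φ : Matrix (Fin n) (Fin m) F) (hsurj : Function.Surjective Φ.mulVec) :
    ∀ x : Fin m → F, ((Φ.map fun c => c ^ p ^ ℓ)ᵀ * Φ).mulVec x = 0 ↔ Φ.mulVec x = 0 :=
  gramian_ker_general p e ℓ n m hp F hcard Φ hsurj
end

section
/- Let Φ be an n×m matrix over F and c ∈ F. If Φ·Φ^{†_ℓ} = c·I (so the columns of Φ form an ℓ-Galois c-tight frame for F^n), then Φ·Φ^{†_{e−ℓ}} = c^{p^{e−ℓ}}·I, where Φ^{†_{e−ℓ}} = σ_{e−ℓ}(Φ)^t with σ_{e−ℓ}(x) = x^{p^{e−ℓ}}; that is, the columns of Φ form an (e−ℓ)-Galois c^{p^{e−ℓ}}-tight frame. -/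
open Matrix BigOperators

/-! Since `x ^ p ^ e = x`, the ring endomorphism `σ_{e-ℓ}` is a left inverse of `σ_ℓ`; applying it
entrywise to `Φ σ_ℓ(Φ)ᵀ = c I` gives `σ_{e-ℓ}(Φ) Φᵀ = σ_{e-ℓ}(c) I`, whose transpose is the claim. -/

theorem Matrix.mul_transpose_map_eq_smul_one_of_leftInverse {R m n : Type*} [CommRing R]
    [Fintype m] [DecidableEq m] [Fintype n] (f : R →+* R) (g : R → R)
    (hfg : Function.LeftInverse f g) (Φ : Matrix m n R) (c : R)
    (h : Φ * (Φ.map g)ᵀ = c • (1 : Matrix m m R)) :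
    Φ * (Φ.map f)ᵀ = f c • (1 : Matrix m m R) := by
  have hfg' : (Φ.map g).map f = Φ := by ext; exact hfg _
  calc Φ * (Φ.map f)ᵀ = ((Φ.map f) * ((Φ.map g).map f)ᵀ)ᵀ := by
        rw [hfg', transpose_mul, transpose_transpose]
    _ = ((c • (1 : Matrix m m R)).map f)ᵀ := by rw [← h, Matrix.map_mul, transpose_map]
    _ = f c • (1 : Matrix m m R) := by simp [Matrix.map_smul']

theorem FiniteField.pow_pow_pow_eq_self {F : Type*} [Field F] [Fintype F] {p e a b : ℕ}
    (hcard : Fintype.card F = p ^ e) (hab : a + b = e) (x : F) :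
    (x ^ p ^ a) ^ p ^ b = x := by
  rw [← pow_mul, ← pow_add, hab, ← hcard, FiniteField.pow_card]

theorem tight_frame_conj_general (p e ℓ n m : ℕ) (hp : p.Prime) (hℓ : ℓ ≤ e - 1)
    (F : Type) [Field F] [Fintype F] (hcard : Fintype.card F = p ^ e)
    (Φ : Matrix (Fin n) (Fin m) F) (c : F)
    (htight : Φ * (Φ.map fun x => x ^ p ^ ℓ)ᵀ = c • (1 : Matrix (Fin n) (Fin n) F)) :
    Φ * (Φ.map fun x => x ^ p ^ (e - ℓ))ᵀ =
      c ^ p ^ (e - ℓ) • (1 : Matrix (Fin n) (Fin n) F) := by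
  have : Fact p.Prime := ⟨hp⟩
  have : CharP F p := charP_of_card_eq_prime_pow hcard
  exact Φ.mul_transpose_map_eq_smul_one_of_leftInverse (iterateFrobenius F p (e - ℓ)) _
    (FiniteField.pow_pow_pow_eq_self hcard (by omega)) c htight

/-- If the columns of `Φ` form an ℓ-Galois `c`-tight frame, i.e. `Φ·σ_ℓ(Φ)ᵀ = c·I`,
then they form an `(e−ℓ)`-Galois `c^(p^(e−ℓ))`-tight frame:
`Φ·σ_{e−ℓ}(Φ)ᵀ = c^(p^(e−ℓ))·I`. -/
theorem tight_frame_conj (p e ℓ n m : ℕ) (hp : p.Prime) (he : 1 ≤ e) (hℓ : ℓ ≤ e - 1)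
    (F : Type) [Field F] [Fintype F] (hcard : Fintype.card F = p ^ e)
    (Φ : Matrix (Fin n) (Fin m) F) (c : F)
    (htight : Φ * (Φ.map fun x => x ^ p ^ ℓ)ᵀ = c • (1 : Matrix (Fin n) (Fin n) F)) :
    Φ * (Φ.map fun x => x ^ p ^ (e - ℓ))ᵀ =
      c ^ p ^ (e - ℓ) • (1 : Matrix (Fin n) (Fin n) F) :=
  tight_frame_conj_general p e ℓ n m hp hℓ F hcard Φ c htight
end

section
/- Let Φ be an n×m matrix over F whose columns span F^n (i.e., Φ : F^m → F^n is surjective), and let c ∈ F. If the ℓ-Galois Gram matrix G = Φ^{†_ℓ}Φ satisfies G² = c·G, then for every x, y ∈ F^n one has (Φ^{†_{e−ℓ}}x, Φ^{†_ℓ}y)_ℓ = c·(x,y)_ℓ, where Φ^{†_{e−ℓ}} = σ_{e−ℓ}(Φ)^t with σ_{e−ℓ}(x) = x^{p^{e−ℓ}}. -/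
open Matrix BigOperators

/-! A right inverse `B` of `Φ` gives the left inverse `σ(B)ᵀ` of `σ(Φ)ᵀ`, and conjugating
`G² = c • G` by these two inverses turns it into `Φ σ(Φ)ᵀ = c • 1`. Since `σ_ℓ ∘ σ_{e-ℓ} = id`
on `F`, applying `σ_ℓ` to `Φ^{†_{e-ℓ}} x` gives `Φᵀ σ_ℓ(x)`, so the left-hand side equals
`(x, Φ σ_ℓ(Φ)ᵀ y)_ℓ = c (x, y)_ℓ`. -/

namespace Matrix

variable {R : Type*} [CommSemiring R] {m n : Type*} [Fintype m]

theorem transpose_map_mul_transpose_map_eq_one [DecidableEq n] {S : Type*} [CommSemiring S]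
    (σ : R →+* S) {Φ : Matrix n m R} {B : Matrix m n R} (hB : Φ * B = 1) :
    (B.map σ)ᵀ * (Φ.map σ)ᵀ = 1 := by
  rw [← transpose_mul, ← Matrix.map_mul, hB, Matrix.map_one _ (map_zero σ) (map_one σ),
    transpose_one]

variable [Fintype n]

theorem mul_eq_smul_one_of_sq_eq_smul [DecidableEq m] [DecidableEq n] {A B' : Matrix m n R}
    {B L : Matrix n m R} (hL : L * A = 1) (hB : B * B' = 1) {c : R}
    (h : (A * B) ^ 2 = c • (A * B)) : B * A = c • 1 :=
  calc B * A = L * A * (B * A) * (B * B') := by rw [hL, hB, Matrix.one_mul, Matrix.mul_one]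
    _ = L * (A * B) ^ 2 * B' := by simp only [sq, Matrix.mul_assoc]
    _ = c • 1 := by
        rw [h, Matrix.mul_smul, Matrix.smul_mul, ← Matrix.mul_assoc, hL, Matrix.one_mul, hB]

theorem comp_mulVec_map_transpose_dotProduct {σ : R →+* R} {τ : R → R}
    (hστ : ∀ z, σ (τ z) = z) (Φ : Matrix n m R) (x y : n → R) :
    (σ ∘ ((Φ.map τ)ᵀ *ᵥ x)) ⬝ᵥ ((Φ.map σ)ᵀ *ᵥ y) = (σ ∘ x) ⬝ᵥ ((Φ * (Φ.map σ)ᵀ) *ᵥ y) := by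
  have hσ : σ ∘ ((Φ.map τ)ᵀ *ᵥ x) = Φᵀ *ᵥ (σ ∘ x) := by
    ext i
    rw [Function.comp_apply, RingHom.map_mulVec, transpose_map, map_map]
    simp only [Function.comp_def, hστ, map_id']
  rw [hσ, ← mulVec_mulVec, dotProduct_mulVec (σ ∘ x) Φ, mulVec_transpose]

end Matrix

theorem FiniteField.pow_pow_pow_of_add_eq {K : Type*} [Field K] [Fintype K] {p e a b : ℕ}
    (hcard : Fintype.card K = p ^ e) (hab : a + b = e) (z : K) : (z ^ p ^ a) ^ p ^ b = z := by
  rw [← pow_mul, ← pow_add, hab, ← hcard, FiniteField.pow_card]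

theorem gram_sq_implies_form_general (p e ℓ n m : ℕ) (hp : p.Prime) (hℓ : ℓ ≤ e - 1)
    (F : Type) [Field F] [Fintype F] (hcard : Fintype.card F = p ^ e)
    (Φ : Matrix (Fin n) (Fin m) F) (c : F)
    (hsurj : Function.Surjective Φ.mulVec)
    (hG : ((Φ.map fun x => x ^ p ^ ℓ)ᵀ * Φ) ^ 2 = c • ((Φ.map fun x => x ^ p ^ ℓ)ᵀ * Φ)) :
    ∀ x y : Fin n → F,
      (∑ i, ((Φ.map fun z => z ^ p ^ (e - ℓ))ᵀ.mulVec x i) ^ p ^ ℓ *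
          ((Φ.map fun z => z ^ p ^ ℓ)ᵀ.mulVec y i)) =
        c * ∑ i, x i ^ p ^ ℓ * y i := by
  intro x y
  have : Fact p.Prime := ⟨hp⟩
  have : CharP F p := charP_of_card_eq_prime_pow hcard
  obtain ⟨B, hB⟩ := mulVec_surjective_iff_exists_right_inverse.mp hsurj
  have hΦΦ : Φ * (Φ.map (iterateFrobenius F p ℓ))ᵀ = c • 1 :=
    mul_eq_smul_one_of_sq_eq_smul (transpose_map_mul_transpose_map_eq_one _ hB) hB hG
  have hinv (z : F) : iterateFrobenius F p ℓ (z ^ p ^ (e - ℓ)) = z :=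
    FiniteField.pow_pow_pow_of_add_eq hcard (by omega) z
  have hform := comp_mulVec_map_transpose_dotProduct hinv Φ x y
  rwa [hΦΦ, smul_mulVec, one_mulVec, dotProduct_smul, smul_eq_mul] at hform

/-- If the columns of `Φ` span `F^n` and the ℓ-Galois Gram matrix `G = σ_ℓ(Φ)ᵀ·Φ`
satisfies `G² = c·G`, then `(Φ^{†_{e−ℓ}}x, Φ^{†_ℓ}y)_ℓ = c·(x,y)_ℓ` for all `x, y`,
where `(u,w)_ℓ = ∑ i, u_i^(p^ℓ)·w_i` and `Φ^{†_k} = σ_k(Φ)ᵀ`. -/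
theorem gram_sq_implies_form (p e ℓ n m : ℕ) (hp : p.Prime) (he : 1 ≤ e) (hℓ : ℓ ≤ e - 1)
    (F : Type) [Field F] [Fintype F] (hcard : Fintype.card F = p ^ e)
    (Φ : Matrix (Fin n) (Fin m) F) (c : F)
    (hsurj : Function.Surjective Φ.mulVec)
    (hG : ((Φ.map fun x => x ^ p ^ ℓ)ᵀ * Φ) ^ 2 = c • ((Φ.map fun x => x ^ p ^ ℓ)ᵀ * Φ)) :
    ∀ x y : Fin n → F,
      (∑ i, ((Φ.map fun z => z ^ p ^ (e - ℓ))ᵀ.mulVec x i) ^ p ^ ℓ *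
          ((Φ.map fun z => z ^ p ^ ℓ)ᵀ.mulVec y i)) =
        c * ∑ i, x i ^ p ^ ℓ * y i :=
  gram_sq_implies_form_general p e ℓ n m hp hℓ F hcard Φ c hsurj hG
end

section
/- Let {φ_i}_{i=1}^m be an ℓ-Galois (a, 0, c)-equiangular tight frame for F^n, i.e., the n×m matrix Φ with columns φ_i satisfies: Φ is surjective, Φ·Φ^{†_ℓ} = c·I, (φ_i,φ_i)_ℓ = a for all i, and (φ_i,φ_j)_ℓ·(φ_j,φ_i)_ℓ = 0 for all i ≠ j. Then a = c or a = 0. -/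
open Matrix

/-!
The Gram matrix `G = Φ^{†_ℓ} Φ` satisfies `G² = c G` because `Φ Φ^{†_ℓ} = c I`. Its diagonal
entries are `a`, and the products `G i j * G j i` vanish off the diagonal, so comparing a
diagonal entry of both sides gives `a² = c a`.
-/

theorem Matrix.mul_mul_self_eq_smul_of_mul_eq_smul_one {l k R : Type*} [Fintype l] [Fintype k]
    [DecidableEq k] [CommSemiring R] {A : Matrix l k R} {B : Matrix k l R} {c : R}
    (h : B * A = c • 1) : A * B * (A * B) = c • (A * B) := by
  rw [Matrix.mul_assoc, ← Matrix.mul_assoc B, h, Matrix.smul_mul, Matrix.one_mul,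
    Matrix.mul_smul]

theorem Matrix.mul_self_apply_self_of_off_diag_mul_eq_zero {k R : Type*} [Fintype k]
    [NonUnitalNonAssocSemiring R] {G : Matrix k k R} {a : R} (hdiag : ∀ i, G i i = a)
    (hoff : ∀ i j, i ≠ j → G i j * G j i = 0) (i : k) : (G * G) i i = a * a := by
  rw [Matrix.mul_apply, Finset.sum_eq_single i (fun j _ hji => hoff i j hji.symm)
    (fun hi => absurd (Finset.mem_univ i) hi), hdiag]

theorem etf_b_zero_general (p ℓ n m : ℕ)
    (hm : 1 ≤ m)
    (F : Type) [Field F]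
    (Φ : Matrix (Fin n) (Fin m) F) (a c : F)
    (htight : Φ * (Φ.map fun x => x ^ p ^ ℓ)ᵀ = c • (1 : Matrix (Fin n) (Fin n) F))
    (hdiag : ∀ i : Fin m, ∑ k, (Φ k i) ^ p ^ ℓ * Φ k i = a)
    (hoff : ∀ i j : Fin m, i ≠ j →
      (∑ k, (Φ k i) ^ p ^ ℓ * Φ k j) * (∑ k, (Φ k j) ^ p ^ ℓ * Φ k i) = 0) :
    a = c ∨ a = 0 := by
  set G := (Φ.map fun x => x ^ p ^ ℓ)ᵀ * Φ
  have hGdiag : ∀ i, G i i = a := hdiag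
  have hGoff : ∀ i j, i ≠ j → G i j * G j i = 0 := hoff
  have hG2 : G * G = c • G := mul_mul_self_eq_smul_of_mul_eq_smul_one htight
  have hsq : a * a = c * a := by
    rw [← G.mul_self_apply_self_of_off_diag_mul_eq_zero hGdiag hGoff ⟨0, hm⟩, hG2,
      Matrix.smul_apply, smul_eq_mul, hGdiag]
  exact mul_eq_mul_right_iff.mp hsq

/-- If the columns `φ_1, …, φ_m` of `Φ` form an ℓ-Galois `(a, 0, c)`-equiangular tight
frame for `F^n` (spanning, `Φ·σ_ℓ(Φ)ᵀ = c·I`, `(φ_i,φ_i)_ℓ = a` for all `i`, and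
`(φ_i,φ_j)_ℓ·(φ_j,φ_i)_ℓ = 0` for `i ≠ j`), then `a = c` or `a = 0`. -/
theorem etf_b_zero (p e ℓ n m : ℕ) (hp : p.Prime) (he : 1 ≤ e) (hℓ : ℓ ≤ e - 1)
    (hm : 1 ≤ m)
    (F : Type) [Field F] [Fintype F] (hcard : Fintype.card F = p ^ e)
    (Φ : Matrix (Fin n) (Fin m) F) (a c : F)
    (hsurj : Function.Surjective Φ.mulVec)
    (htight : Φ * (Φ.map fun x => x ^ p ^ ℓ)ᵀ = c • (1 : Matrix (Fin n) (Fin n) F))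
    (hdiag : ∀ i : Fin m, ∑ k, (Φ k i) ^ p ^ ℓ * Φ k i = a)
    (hoff : ∀ i j : Fin m, i ≠ j →
      (∑ k, (Φ k i) ^ p ^ ℓ * Φ k j) * (∑ k, (Φ k j) ^ p ^ ℓ * Φ k i) = 0) :
    a = c ∨ a = 0 :=
  etf_b_zero_general p ℓ n m hm F Φ a c htight hdiag hoff
end

section
/- Let M be an n×n matrix over F with M·M^{†_ℓ} = −I and M^{†_ℓ}·M = −I (equivalently, the columns of M form an ℓ-Galois (−1, 0, −1)-equiangular tight frame for F^n). Let C ⊆ F^{2n} be the row space of the n×2n block matrix G₀ = [I | M]. Then C is an ℓ-Galois self-dual code: C = C^{⊥_ℓ}. -/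
/-!
Write `σ` for the Frobenius power `x ↦ x ^ p ^ ℓ`, a ring endomorphism of `F`. The code `C` is
`{(u, u M)}`, and pairing `x` with `(v, v M)` gives `(x₁ + σ(M) x₂) · σ(v)`. For `x = (u, u M)`
this vanishes because `σ(M) Mᵀ = -1`; conversely, if it vanishes for all `v` then
`x₁ = -σ(M) x₂`, and `σ(M)ᵀ M = -1` turns this into `x₂ = x₁ M`, i.e. `x ∈ C`.
-/

open Matrix

variable {R m n : Type*} [CommRing R] [Fintype m]

theorem mem_span_fromCols_one_iff [DecidableEq m] (M : Matrix m n R) (x : m ⊕ n → R) :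
    x ∈ Submodule.span R (Set.range (fromCols 1 M)) ↔ x ∘ Sum.inr = x ∘ Sum.inl ᵥ* M := by
  rw [show Set.range (fromCols 1 M) = Set.range (fromCols 1 M).row from rfl,
    ← range_vecMulLinear, LinearMap.mem_range]
  simp only [vecMulLinear_apply, vecMul_fromCols, vecMul_one]
  constructor
  · rintro ⟨u, rfl⟩
    rfl
  · intro h
    exact ⟨x ∘ Sum.inl, by rw [← h, Sum.elim_comp_inl_inr]⟩

theorem dotProduct_comp_sumElim_vecMul [Fintype n] (σ : R →+* R) (M : Matrix m n R)
    (x : m ⊕ n → R) (v : m → R) :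
    x ⬝ᵥ σ ∘ Sum.elim v (v ᵥ* M) = (x ∘ Sum.inl + M.map σ *ᵥ x ∘ Sum.inr) ⬝ᵥ σ ∘ v := by
  have hσ : σ ∘ (v ᵥ* M) = σ ∘ v ᵥ* M.map σ := funext (σ.map_vecMul M v)
  conv_lhs => rw [← Sum.elim_comp_inl_inr x, Sum.comp_elim, sumElim_dotProduct_sumElim, hσ]
  rw [add_dotProduct, dotProduct_comm (M.map σ *ᵥ _), dotProduct_mulVec, dotProduct_comm (_ ᵥ* _)]

theorem eq_zero_of_forall_dotProduct_comp_eq_zero [DecidableEq m] (σ : R →+* R) (w : m → R)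
    (h : ∀ v, w ⬝ᵥ σ ∘ v = 0) : w = 0 := by
  funext j
  have hσ : σ ∘ Pi.single j 1 = Pi.single j 1 := by
    ext i
    simp [Pi.single_apply, apply_ite σ]
  simpa [hσ] using h (Pi.single j 1)

theorem mem_span_fromCols_one_iff_forall_dotProduct_eq_zero [DecidableEq m] (σ : R →+* R)
    {M : Matrix m m R} (h1 : M * (M.map σ)ᵀ = -1) (h2 : (M.map σ)ᵀ * M = -1) (x : m ⊕ m → R) :
    x ∈ Submodule.span R (Set.range (fromCols 1 M)) ↔
      ∀ c ∈ Submodule.span R (Set.range (fromCols 1 M)), x ⬝ᵥ σ ∘ c = 0 := by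
  have h1_transpose : M.map σ * Mᵀ = -1 := by
    simpa only [transpose_mul, transpose_transpose, transpose_neg, transpose_one]
      using congrArg transpose h1
  simp only [mem_span_fromCols_one_iff]
  constructor
  · intro hx c hc
    rw [← Sum.elim_comp_inl_inr c, hc, dotProduct_comp_sumElim_vecMul, hx, mulVec_vecMul,
      h1_transpose, neg_mulVec, one_mulVec, add_neg_cancel, zero_dotProduct]
  · intro hx
    have hinl : x ∘ Sum.inl + M.map σ *ᵥ x ∘ Sum.inr = 0 :=
      eq_zero_of_forall_dotProduct_comp_eq_zero σ _ fun v => by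
        rw [← dotProduct_comp_sumElim_vecMul σ M]
        exact hx _ rfl
    rw [eq_neg_of_add_eq_zero_left hinl, neg_vecMul, ← vecMul_transpose, vecMul_vecMul, h2,
      vecMul_neg, vecMul_one, neg_neg]

theorem etf_gives_self_dual_general (p e ℓ n : ℕ) (hp : p.Prime)
    (F : Type) [Field F] [Fintype F] (hcard : Fintype.card F = p ^ e)
    (M : Matrix (Fin n) (Fin n) F)
    (h1 : M * (M.map fun x => x ^ p ^ ℓ)ᵀ = -1)
    (h2 : (M.map fun x => x ^ p ^ ℓ)ᵀ * M = -1)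
    (C : Submodule F (Fin n ⊕ Fin n → F))
    (hC : C = Submodule.span F (Set.range fun i => Matrix.fromCols 1 M i)) :
    ∀ x : Fin n ⊕ Fin n → F, x ∈ C ↔ ∀ c ∈ C, ∑ i, x i * c i ^ p ^ ℓ = 0 := by
  have : Fact p.Prime := ⟨hp⟩
  have : CharP F p := charP_of_card_eq_prime_pow hcard
  subst hC
  exact mem_span_fromCols_one_iff_forall_dotProduct_eq_zero (iterateFrobenius F p ℓ) h1 h2

/-- If `M·M^{†_ℓ} = −I = M^{†_ℓ}·M` (the columns of `M` form an ℓ-Galois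
`(−1,0,−1)`-ETF for `F^n`), then the row space `C` of `G₀ = [I | M]` is an ℓ-Galois
self-dual code: `C = C^{⊥_ℓ}`, where `⟨x,c⟩_ℓ = ∑ i, x_i·c_i^(p^ℓ)`. -/
theorem etf_gives_self_dual (p e ℓ n : ℕ) (hp : p.Prime) (he : 1 ≤ e) (hℓ : ℓ ≤ e - 1)
    (F : Type) [Field F] [Fintype F] (hcard : Fintype.card F = p ^ e)
    (M : Matrix (Fin n) (Fin n) F)
    (h1 : M * (M.map fun x => x ^ p ^ ℓ)ᵀ = -1)
    (h2 : (M.map fun x => x ^ p ^ ℓ)ᵀ * M = -1)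
    (C : Submodule F (Fin n ⊕ Fin n → F))
    (hC : C = Submodule.span F (Set.range fun i => Matrix.fromCols 1 M i)) :
    ∀ x : Fin n ⊕ Fin n → F, x ∈ C ↔ ∀ c ∈ C, ∑ i, x i * c i ^ p ^ ℓ = 0 :=
  etf_gives_self_dual_general p e ℓ n hp F hcard M h1 h2 C hC
end

section
/- Let a ∈ F with a ≠ 0 and a ≠ −1, and let M be an n×n matrix over F with M·M^{†_ℓ} = a·I and M^{†_ℓ}·M = a·I (equivalently, the columns of M form an ℓ-Galois (a, 0, a)-equiangular tight frame for F^n). Let C ⊆ F^{2n} be the row space of the n×2n block matrix G₀ = [I | M]. Then C is an ℓ-Galois LCD code: C ∩ C^{⊥_ℓ} = {0}. -/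
/-!
The Gram matrix `G₀ G₀^{†_ℓ} = I + M M^{†_ℓ} = (1 + a) I` is invertible because `a ≠ -1`.
A codeword `x = v G₀` that is `ℓ`-orthogonal to every row of `G₀` satisfies
`v (G₀ G₀^{†_ℓ}) = 0`, hence `v = 0` and `x = 0`.
-/

open Matrix

theorem Matrix.eq_zero_of_mem_span_row_of_forall_sum_mul_map_eq_zero
    {ι κ F : Type*} [Field F] [Fintype ι] [Fintype κ] [DecidableEq ι]
    (G : Matrix ι κ F) (f : F → F) (hG : (G * (G.map f)ᵀ).det ≠ 0)
    {x : κ → F} (hx : x ∈ Submodule.span F (Set.range G))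
    (horth : ∀ k, ∑ j, x j * f (G k j) = 0) : x = 0 := by
  obtain ⟨v, rfl⟩ : x ∈ LinearMap.range G.vecMulLinear := by
    rwa [range_vecMulLinear]
  suffices v = 0 by rw [this, map_zero]
  refine eq_zero_of_vecMul_eq_zero hG ?_
  rw [← vecMul_vecMul]
  ext k
  exact horth k

theorem Matrix.fromCols_mul_transpose_map_fromCols {m n₁ n₂ R S : Type*} [Semiring R]
    [Fintype n₁] [Fintype n₂] (A₁ : Matrix m n₁ R) (A₂ : Matrix m n₂ R) (f : S → R)
    (B₁ : Matrix m n₁ S) (B₂ : Matrix m n₂ S) :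
    fromCols A₁ A₂ * ((fromCols B₁ B₂).map f)ᵀ = A₁ * (B₁.map f)ᵀ + A₂ * (B₂.map f)ᵀ := by
  rw [fromCols_map, transpose_fromCols, fromCols_mul_fromRows]

theorem etf_gives_lcd_general (p ℓ n : ℕ) (hp : p.Prime)
    (F : Type) [Field F]
    (a : F) (ha1 : a ≠ -1)
    (M : Matrix (Fin n) (Fin n) F)
    (h1 : M * (M.map fun x => x ^ p ^ ℓ)ᵀ = a • (1 : Matrix (Fin n) (Fin n) F))
    (C : Submodule F (Fin n ⊕ Fin n → F))
    (hC : C = Submodule.span F (Set.range fun i => Matrix.fromCols 1 M i)) :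
    ∀ x : Fin n ⊕ Fin n → F, x ∈ C → (∀ c ∈ C, ∑ i, x i * c i ^ p ^ ℓ = 0) → x = 0 := by
  intro x hx horth
  set G : Matrix (Fin n) (Fin n ⊕ Fin n) F := fromCols 1 M
  have hgram : G * (G.map (· ^ p ^ ℓ))ᵀ = (1 + a) • 1 := by
    rw [fromCols_mul_transpose_map_fromCols, h1,
      Matrix.map_one (· ^ p ^ ℓ) (zero_pow (pow_ne_zero _ hp.ne_zero)) (one_pow _),
      transpose_one, mul_one, add_smul, one_smul]
  have hgram_det : (G * (G.map (· ^ p ^ ℓ))ᵀ).det ≠ 0 := by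
    rw [hgram, det_smul, det_one, mul_one]
    exact pow_ne_zero _ fun h => ha1 (eq_neg_of_add_eq_zero_right h)
  subst hC
  exact G.eq_zero_of_mem_span_row_of_forall_sum_mul_map_eq_zero _ hgram_det hx
    fun k => horth _ (Submodule.subset_span ⟨k, rfl⟩)

/-- If `a ≠ 0`, `a ≠ −1` and `M·M^{†_ℓ} = a·I = M^{†_ℓ}·M` (the columns of `M` form an
ℓ-Galois `(a,0,a)`-ETF for `F^n`), then the row space `C` of `G₀ = [I | M]` is an
ℓ-Galois LCD code: `C ∩ C^{⊥_ℓ} = {0}`, where `⟨x,c⟩_ℓ = ∑ i, x_i·c_i^(p^ℓ)`. -/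
theorem etf_gives_lcd (p e ℓ n : ℕ) (hp : p.Prime) (he : 1 ≤ e) (hℓ : ℓ ≤ e - 1)
    (F : Type) [Field F] [Fintype F] (hcard : Fintype.card F = p ^ e)
    (a : F) (ha0 : a ≠ 0) (ha1 : a ≠ -1)
    (M : Matrix (Fin n) (Fin n) F)
    (h1 : M * (M.map fun x => x ^ p ^ ℓ)ᵀ = a • (1 : Matrix (Fin n) (Fin n) F))
    (h2 : (M.map fun x => x ^ p ^ ℓ)ᵀ * M = a • (1 : Matrix (Fin n) (Fin n) F))
    (C : Submodule F (Fin n ⊕ Fin n → F))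
    (hC : C = Submodule.span F (Set.range fun i => Matrix.fromCols 1 M i)) :
    ∀ x : Fin n ⊕ Fin n → F, x ∈ C → (∀ c ∈ C, ∑ i, x i * c i ^ p ^ ℓ = 0) → x = 0 :=
  etf_gives_lcd_general p ℓ n hp F a ha1 M h1 C hC
end

section
/- Let s, t ∈ F be nonzero, let J be the n×n all-ones matrix, and set M = s·I + t·J. If s·t^{p^ℓ} + t·s^{p^ℓ} + n·t^{p^ℓ+1} = 0 (where n denotes the image of the natural number n in F), then M·M^{†_ℓ} = s^{p^ℓ+1}·I. In particular, M^{†_ℓ}M is the ℓ-Galois Gram matrix of an (s^{p^ℓ+1}, 0, s^{p^ℓ+1})_ℓ-equiangular tight frame for F^n, and M·M^{†_ℓ} has rank n. -/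
open Matrix BigOperators

/-!
Matrices `a • 1 + b • J` form a commutative algebra, since `J * J = n • J`. In characteristic
`p` the map `x ↦ x ^ p ^ ℓ` is a ring homomorphism, so `M^{†_ℓ} = s^q • 1 + t^q • J` with
`q = p ^ ℓ`, and `M * M^{†_ℓ} = s^(q+1) • 1 + (s t^q + t s^q + n t^(q+1)) • J`, whose
`J`-coefficient vanishes by hypothesis. The remaining claims hold for any nonzero scalar matrix.
-/

namespace Matrix

variable {ι R S K : Type*}

theorem allOnes_mul_allOnes [Fintype ι] [Semiring R] :
    (of fun _ _ => 1 : Matrix ι ι R) * of (fun _ _ => 1) =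
      (Fintype.card ι : R) • of fun _ _ => 1 := by
  ext; simp [mul_apply]

theorem rank_smul_one [Fintype ι] [DecidableEq ι] [Field K] {c : K} (hc : c ≠ 0) :
    (c • 1 : Matrix ι ι K).rank = Fintype.card ι := by
  rw [rank_smul_of_mem_nonZeroDivisors _ (mem_nonZeroDivisors_of_ne_zero hc), rank_one]

theorem mulVec_surjective_of_mul_eq_smul_one [Fintype ι] [DecidableEq ι] [Field K]
    {A B : Matrix ι ι K} {c : K} (hc : c ≠ 0) (h : A * B = c • 1) :
    Function.Surjective A.mulVec :=
  mulVec_surjective_iff_exists_right_inverse.mpr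
    ⟨c⁻¹ • B, by rw [Matrix.mul_smul, h, smul_smul, inv_mul_cancel₀ hc, one_smul]⟩

variable [DecidableEq ι]

def scalarAddAllOnes [Semiring R] (a b : R) : Matrix ι ι R :=
  a • 1 + b • of fun _ _ => 1

theorem scalarAddAllOnes_zero [Semiring R] (a : R) :
    (scalarAddAllOnes a 0 : Matrix ι ι R) = a • 1 := by
  simp [scalarAddAllOnes]

theorem transpose_scalarAddAllOnes [Semiring R] (a b : R) :
    (scalarAddAllOnes a b : Matrix ι ι R)ᵀ = scalarAddAllOnes a b := by
  ext i j
  by_cases h : i = j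
  · subst h; rfl
  · simp [scalarAddAllOnes, one_apply_ne h, one_apply_ne (Ne.symm h)]

theorem map_scalarAddAllOnes [Semiring R] [Semiring S] (f : R →+* S) (a b : R) :
    (scalarAddAllOnes a b : Matrix ι ι R).map f = scalarAddAllOnes (f a) (f b) := by
  ext i j
  by_cases h : i = j
  · subst h; simp [scalarAddAllOnes]
  · simp [scalarAddAllOnes, one_apply_ne h]

variable [Fintype ι]

theorem scalarAddAllOnes_mul_scalarAddAllOnes [CommSemiring R] (a b c d : R) :
    (scalarAddAllOnes a b : Matrix ι ι R) * scalarAddAllOnes c d =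
      scalarAddAllOnes (a * c) (a * d + b * c + Fintype.card ι * (b * d)) := by
  simp only [scalarAddAllOnes, add_mul, mul_add, smul_mul_smul_comm, one_mul, mul_one,
    allOnes_mul_allOnes, smul_smul]
  module

theorem scalarAddAllOnes_mul_comm [CommSemiring R] (a b c d : R) :
    (scalarAddAllOnes a b : Matrix ι ι R) * scalarAddAllOnes c d =
      scalarAddAllOnes c d * scalarAddAllOnes a b := by
  simp only [scalarAddAllOnes_mul_scalarAddAllOnes]
  congr 1 <;> ring

theorem scalarAddAllOnes_mul_map_transpose [CommSemiring R] (σ : R →+* R) (a b : R) :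
    (scalarAddAllOnes a b : Matrix ι ι R) * ((scalarAddAllOnes a b).map σ)ᵀ =
      scalarAddAllOnes (a * σ a) (a * σ b + b * σ a + Fintype.card ι * (b * σ b)) := by
  rw [map_scalarAddAllOnes, transpose_scalarAddAllOnes, scalarAddAllOnes_mul_scalarAddAllOnes]

end Matrix

theorem case_iii_etf_general (p e ℓ n : ℕ) (hp : p.Prime)
    (F : Type) [Field F] [Fintype F] (hcard : Fintype.card F = p ^ e)
    (s t : F) (hs : s ≠ 0)
    (M : Matrix (Fin n) (Fin n) F)
    (hM : M = s • (1 : Matrix (Fin n) (Fin n) F) + t • Matrix.of (fun _ _ => (1 : F)))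
    (hcond : s * t ^ p ^ ℓ + t * s ^ p ^ ℓ + (n : F) * t ^ (p ^ ℓ + 1) = 0) :
    M * (M.map fun x => x ^ p ^ ℓ)ᵀ = s ^ (p ^ ℓ + 1) • (1 : Matrix (Fin n) (Fin n) F) ∧
    Function.Surjective M.mulVec ∧
    (∀ i, ((M.map fun x => x ^ p ^ ℓ)ᵀ * M) i i = s ^ (p ^ ℓ + 1)) ∧
    (∀ i j, i ≠ j →
      ((M.map fun x => x ^ p ^ ℓ)ᵀ * M) i j * ((M.map fun x => x ^ p ^ ℓ)ᵀ * M) j i = 0) ∧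
    (M * (M.map fun x => x ^ p ^ ℓ)ᵀ).rank = n := by
  have : Fact p.Prime := ⟨hp⟩
  have : CharP F p := charP_of_card_eq_prime_pow hcard
  change M = scalarAddAllOnes s t at hM
  rw [show (fun x : F => x ^ p ^ ℓ) = iterateFrobenius F p ℓ from rfl]
  have hgram : M * (M.map (iterateFrobenius F p ℓ))ᵀ = s ^ (p ^ ℓ + 1) • 1 := by
    rw [hM, scalarAddAllOnes_mul_map_transpose, Fintype.card_fin]
    simp only [iterateFrobenius_def, ← pow_succ', hcond, scalarAddAllOnes_zero]
  have hgram_swap : (M.map (iterateFrobenius F p ℓ))ᵀ * M = s ^ (p ^ ℓ + 1) • 1 := by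
    rw [← hgram, hM, map_scalarAddAllOnes, transpose_scalarAddAllOnes, scalarAddAllOnes_mul_comm]
  have hc : s ^ (p ^ ℓ + 1) ≠ 0 := pow_ne_zero _ hs
  refine ⟨hgram, mulVec_surjective_of_mul_eq_smul_one hc hgram, fun i => ?_, fun i j hij => ?_,
    by rw [hgram, rank_smul_one hc, Fintype.card_fin]⟩
  · simp [hgram_swap]
  · simp [hgram_swap, one_apply_ne hij]

/-- Case (iii): for nonzero `s, t ∈ F` and `M = s·I + t·J` (`J` the all-ones matrix),
if `s·t^(p^ℓ) + t·s^(p^ℓ) + n·t^(p^ℓ+1) = 0` then `M·M^{†_ℓ} = s^(p^ℓ+1)·I`; in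
particular `M^{†_ℓ}·M` is the ℓ-Galois Gram matrix of an
`(s^(p^ℓ+1), 0, s^(p^ℓ+1))_ℓ`-ETF for `F^n`, and `M·M^{†_ℓ}` has rank `n`. -/
theorem case_iii_etf (p e ℓ n : ℕ) (hp : p.Prime) (he : 1 ≤ e) (hℓ : ℓ ≤ e - 1)
    (F : Type) [Field F] [Fintype F] (hcard : Fintype.card F = p ^ e)
    (s t : F) (hs : s ≠ 0) (ht : t ≠ 0)
    (M : Matrix (Fin n) (Fin n) F)
    (hM : M = s • (1 : Matrix (Fin n) (Fin n) F) + t • Matrix.of (fun _ _ => (1 : F)))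
    (hcond : s * t ^ p ^ ℓ + t * s ^ p ^ ℓ + (n : F) * t ^ (p ^ ℓ + 1) = 0) :
    M * (M.map fun x => x ^ p ^ ℓ)ᵀ = s ^ (p ^ ℓ + 1) • (1 : Matrix (Fin n) (Fin n) F) ∧
    Function.Surjective M.mulVec ∧
    (∀ i, ((M.map fun x => x ^ p ^ ℓ)ᵀ * M) i i = s ^ (p ^ ℓ + 1)) ∧
    (∀ i j, i ≠ j →
      ((M.map fun x => x ^ p ^ ℓ)ᵀ * M) i j * ((M.map fun x => x ^ p ^ ℓ)ᵀ * M) j i = 0) ∧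
    (M * (M.map fun x => x ^ p ^ ℓ)ᵀ).rank = n :=
  case_iii_etf_general p e ℓ n hp F hcard s t hs M hM hcond
end

section
/- Let A be an n×n matrix over F with A·A^{†_ℓ} = −I (so [I | A] generates an ℓ-Galois self-dual code of length 2n). Let r, t ∈ F be nonzero, let J be the n×n all-ones matrix, and set M = r·A + t·J. Suppose there is θ ∈ F with Σ_{k=1}^n A_{ik} = θ for every row index i, and suppose r·t^{p^ℓ}·θ + t·r^{p^ℓ}·θ^{p^ℓ} + n·t^{p^ℓ+1} = 0 (where n denotes the image of the natural number n in F). Then M·M^{†_ℓ} = −r^{p^ℓ+1}·I. -/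
/-!
For any ring endomorphism `σ`, expanding `M σ(M)ᵀ` for `M = r A + t J` splits it into
`r σ(r) · A σ(A)ᵀ` plus a multiple of the all-ones matrix `J`. Constant row sums `θ` make that
multiple `r σ(t) θ + t σ(r) σ(θ) + n t σ(t)`. Since `F` has characteristic `p`, `x ↦ x ^ p ^ ℓ` is
such a `σ`, and the hypothesis on `θ` says exactly that the multiple of `J` vanishes.
-/

open Matrix

section

variable {R ι : Type*} [CommRing R] [Fintype ι]

theorem smul_add_smul_ones_mul_map_transpose (σ : R →+* R) (A : Matrix ι ι R) (r t θ : R)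
    (hθ : ∀ i, ∑ k, A i k = θ) :
    (r • A + t • of fun _ _ => (1 : R)) * ((r • A + t • of fun _ _ => (1 : R)).map σ)ᵀ =
      (r * σ r) • (A * (A.map σ)ᵀ) +
        (r * σ t * θ + t * σ r * σ θ + Fintype.card ι * (t * σ t)) • of fun _ _ => (1 : R) := by
  ext i j
  have hσθ : ∑ k, σ (A j k) = σ θ := by rw [← map_sum, hθ]
  simp only [mul_apply, transpose_apply, map_apply, Matrix.add_apply, Matrix.smul_apply, of_apply,
    smul_eq_mul, map_add, map_mul, mul_one]
  calc ∑ k, (r * A i k + t) * (σ r * σ (A j k) + σ t)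
      = r * σ r * ∑ k, A i k * σ (A j k) + r * σ t * ∑ k, A i k + t * σ r * ∑ k, σ (A j k)
          + ∑ _k : ι, t * σ t := by
        simp only [Finset.mul_sum, ← Finset.sum_add_distrib]
        exact Finset.sum_congr rfl fun k _ => by ring
    _ = _ := by rw [hθ, hσθ, Finset.sum_const, Finset.card_univ, nsmul_eq_mul]; ring

end

theorem case_iv_etf_general (p e ℓ n : ℕ) (hp : p.Prime)
    (F : Type) [Field F] [Fintype F] (hcard : Fintype.card F = p ^ e)
    (A : Matrix (Fin n) (Fin n) F)
    (hA : A * (A.map fun x => x ^ p ^ ℓ)ᵀ = -1)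
    (r t : F)
    (M : Matrix (Fin n) (Fin n) F)
    (hM : M = r • A + t • Matrix.of (fun _ _ => (1 : F)))
    (θ : F) (hθ : ∀ i, ∑ k, A i k = θ)
    (hcond : r * t ^ p ^ ℓ * θ + t * r ^ p ^ ℓ * θ ^ p ^ ℓ + (n : F) * t ^ (p ^ ℓ + 1) = 0) :
    M * (M.map fun x => x ^ p ^ ℓ)ᵀ = (-(r ^ (p ^ ℓ + 1))) • (1 : Matrix (Fin n) (Fin n) F) := by
  have : Fact p.Prime := ⟨hp⟩
  have : CharP F p := charP_of_card_eq_prime_pow hcard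
  let σ := iterateFrobenius F p ℓ
  have hA' : A * (A.map σ)ᵀ = -1 := hA
  subst hM
  refine (smul_add_smul_ones_mul_map_transpose σ A r t θ hθ).trans ?_
  rw [hA', Fintype.card_fin]
  simp only [σ, iterateFrobenius_def]
  rw [← pow_succ', ← pow_succ', hcond, zero_smul, add_zero, smul_neg, neg_smul]

/-- Case (iv): let `A·A^{†_ℓ} = −I` (so `[I | A]` generates an ℓ-Galois self-dual
code), let `r, t ≠ 0`, and `M = r·A + t·J`. If every row of `A` sums to `θ` and
`r·t^(p^ℓ)·θ + t·r^(p^ℓ)·θ^(p^ℓ) + n·t^(p^ℓ+1) = 0`, then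
`M·M^{†_ℓ} = −r^(p^ℓ+1)·I`. -/
theorem case_iv_etf (p e ℓ n : ℕ) (hp : p.Prime) (he : 1 ≤ e) (hℓ : ℓ ≤ e - 1)
    (F : Type) [Field F] [Fintype F] (hcard : Fintype.card F = p ^ e)
    (A : Matrix (Fin n) (Fin n) F)
    (hA : A * (A.map fun x => x ^ p ^ ℓ)ᵀ = -1)
    (r t : F) (hr : r ≠ 0) (ht : t ≠ 0)
    (M : Matrix (Fin n) (Fin n) F)
    (hM : M = r • A + t • Matrix.of (fun _ _ => (1 : F)))
    (θ : F) (hθ : ∀ i, ∑ k, A i k = θ)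
    (hcond : r * t ^ p ^ ℓ * θ + t * r ^ p ^ ℓ * θ ^ p ^ ℓ + (n : F) * t ^ (p ^ ℓ + 1) = 0) :
    M * (M.map fun x => x ^ p ^ ℓ)ᵀ = (-(r ^ (p ^ ℓ + 1))) • (1 : Matrix (Fin n) (Fin n) F) :=
  case_iv_etf_general p e ℓ n hp F hcard A hA r t M hM θ hθ hcond
end

section
/- Let A be an n×n matrix over F with A·A^{†_ℓ} = −I (so [I | A] generates an ℓ-Galois self-dual code of length 2n). Let r, s ∈ F be nonzero and set M = r·A + s·I and G = M·M^{†_ℓ}. Suppose there is α ∈ F such that r·s^{p^ℓ}·A_{ii} + s·r^{p^ℓ}·A_{ii}^{p^ℓ} = α for every i, suppose (r·s^{p^ℓ}·A_{ij} + s·r^{p^ℓ}·A_{ji}^{p^ℓ})·(r·s^{p^ℓ}·A_{ji} + s·r^{p^ℓ}·A_{ij}^{p^ℓ}) = 0 for all i ≠ j, and suppose a := s^{p^ℓ+1} − r^{p^ℓ+1} + α is nonzero. Then G_{ii} = a for every i and G_{ij}·G_{ji} = 0 for all i ≠ j; that is, G has the diagonal and equiangularity structure of the ℓ-Galois Gram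 matrix of an (a, 0, a)_ℓ-equiangular tight frame for F^n. -/
open Matrix

/-!
Since `F` has characteristic `p`, `σ(x) = x^{p^ℓ}` is a ring endomorphism of `F`, so
`M^{†_ℓ} = σ(r) A^{†_ℓ} + σ(s) I`, and expanding `M M^{†_ℓ}` with `A A^{†_ℓ} = -I` gives
`G = (s σ(s) - r σ(r)) I + r σ(s) A + s σ(r) A^{†_ℓ}`.
The hypotheses on `A` are then exactly the statements about the entries of `G`.
-/

section MapTranspose

variable {R ι : Type*} [CommRing R] [DecidableEq ι]

theorem map_smul_add_smul_one (σ : R →+* R) (A : Matrix ι ι R) (r s : R) :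
    (r • A + s • (1 : Matrix ι ι R)).map σ = σ r • A.map σ + σ s • 1 := by
  ext i j
  by_cases h : i = j <;> simp [h]

theorem smul_add_smul_one_mul_map_transpose_eq [Fintype ι] (σ : R →+* R) {A : Matrix ι ι R}
    (hA : A * (A.map σ)ᵀ = -1) (r s : R) :
    (r • A + s • 1) * ((r • A + s • (1 : Matrix ι ι R)).map σ)ᵀ =
      (s * σ s - r * σ r) • 1 + (r * σ s) • A + (s * σ r) • (A.map σ)ᵀ := by
  rw [map_smul_add_smul_one, transpose_add, transpose_smul, transpose_smul, transpose_one,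
    add_mul, mul_add, mul_add, smul_mul_smul_comm, hA, smul_mul_smul_comm, mul_one,
    smul_mul_smul_comm, one_mul, smul_mul_smul_comm, mul_one, sub_smul, smul_neg]
  abel

theorem smul_add_smul_one_mul_map_transpose_apply [Fintype ι] (σ : R →+* R) {A : Matrix ι ι R}
    (hA : A * (A.map σ)ᵀ = -1) (r s : R) (i j : ι) :
    ((r • A + s • 1) * ((r • A + s • (1 : Matrix ι ι R)).map σ)ᵀ) i j =
      (if i = j then s * σ s - r * σ r else 0) + (r * σ s * A i j + s * σ r * σ (A j i)) := by
  rw [smul_add_smul_one_mul_map_transpose_eq σ hA]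
  simp only [Matrix.add_apply, Matrix.smul_apply, one_apply, transpose_apply, map_apply,
    smul_eq_mul, mul_ite, mul_one, mul_zero]
  ring

end MapTranspose

theorem case_v_etf_general (p e ℓ n : ℕ) (hp : p.Prime)
    (F : Type) [Field F] [Fintype F] (hcard : Fintype.card F = p ^ e)
    (A : Matrix (Fin n) (Fin n) F)
    (hA : A * (A.map fun x => x ^ p ^ ℓ)ᵀ = -1)
    (r s : F)
    (M G : Matrix (Fin n) (Fin n) F)
    (hM : M = r • A + s • (1 : Matrix (Fin n) (Fin n) F))
    (hG : G = M * (M.map fun x => x ^ p ^ ℓ)ᵀ)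
    (α : F)
    (hα : ∀ i, r * s ^ p ^ ℓ * A i i + s * r ^ p ^ ℓ * (A i i) ^ p ^ ℓ = α)
    (hoff : ∀ i j, i ≠ j →
      (r * s ^ p ^ ℓ * A i j + s * r ^ p ^ ℓ * (A j i) ^ p ^ ℓ) *
        (r * s ^ p ^ ℓ * A j i + s * r ^ p ^ ℓ * (A i j) ^ p ^ ℓ) = 0)
    (a : F) (haval : a = s ^ (p ^ ℓ + 1) - r ^ (p ^ ℓ + 1) + α) :
    (∀ i, G i i = a) ∧ ∀ i j, i ≠ j → G i j * G j i = 0 := by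
  have : Fact p.Prime := ⟨hp⟩
  have : CharP F p := charP_of_card_eq_prime_pow hcard
  have hG_apply (i j : Fin n) : G i j = (if i = j then s * s ^ p ^ ℓ - r * r ^ p ^ ℓ else 0) +
      (r * s ^ p ^ ℓ * A i j + s * r ^ p ^ ℓ * A j i ^ p ^ ℓ) := by
    subst hM hG
    exact smul_add_smul_one_mul_map_transpose_apply (iterateFrobenius F p ℓ) hA r s i j
  refine ⟨fun i => ?_, fun i j hij => ?_⟩
  · rw [hG_apply, if_pos rfl, hα, haval, pow_succ', pow_succ']
  · rw [hG_apply, hG_apply, if_neg hij, if_neg (Ne.symm hij), zero_add, zero_add]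
    exact hoff i j hij

/-- Case (v): let `A·A^{†_ℓ} = −I`, let `r, s ≠ 0`, `M = r·A + s·I` and
`G = M·M^{†_ℓ}`. If `r·s^(p^ℓ)·A_{ii} + s·r^(p^ℓ)·A_{ii}^(p^ℓ) = α` for all `i`,
`(r·s^(p^ℓ)·A_{ij} + s·r^(p^ℓ)·A_{ji}^(p^ℓ))·(r·s^(p^ℓ)·A_{ji} + s·r^(p^ℓ)·A_{ij}^(p^ℓ)) = 0`
for all `i ≠ j`, and `a := s^(p^ℓ+1) − r^(p^ℓ+1) + α ≠ 0`, then `G_{ii} = a` for all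
`i` and `G_{ij}·G_{ji} = 0` for all `i ≠ j`. -/
theorem case_v_etf (p e ℓ n : ℕ) (hp : p.Prime) (he : 1 ≤ e) (hℓ : ℓ ≤ e - 1)
    (F : Type) [Field F] [Fintype F] (hcard : Fintype.card F = p ^ e)
    (A : Matrix (Fin n) (Fin n) F)
    (hA : A * (A.map fun x => x ^ p ^ ℓ)ᵀ = -1)
    (r s : F) (hr : r ≠ 0) (hs : s ≠ 0)
    (M G : Matrix (Fin n) (Fin n) F)
    (hM : M = r • A + s • (1 : Matrix (Fin n) (Fin n) F))
    (hG : G = M * (M.map fun x => x ^ p ^ ℓ)ᵀ)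
    (α : F)
    (hα : ∀ i, r * s ^ p ^ ℓ * A i i + s * r ^ p ^ ℓ * (A i i) ^ p ^ ℓ = α)
    (hoff : ∀ i j, i ≠ j →
      (r * s ^ p ^ ℓ * A i j + s * r ^ p ^ ℓ * (A j i) ^ p ^ ℓ) *
        (r * s ^ p ^ ℓ * A j i + s * r ^ p ^ ℓ * (A i j) ^ p ^ ℓ) = 0)
    (a : F) (haval : a = s ^ (p ^ ℓ + 1) - r ^ (p ^ ℓ + 1) + α) (ha : a ≠ 0) :
    (∀ i, G i i = a) ∧ ∀ i j, i ≠ j → G i j * G j i = 0 :=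
  case_v_etf_general p e ℓ n hp F hcard A hA r s M G hM hG α hα hoff a haval
end

section
/- Let A be an n×n matrix over F with A·A^{†_ℓ} = −I (so [I | A] generates an ℓ-Galois self-dual code of length 2n). Let r, s, t ∈ F all be nonzero, let J be the n×n all-ones matrix, set M = r·A + s·I + t·J and G = M·M^{†_ℓ}, and for each i write ρ_i := Σ_{k=1}^n A_{ik}. Suppose there is δ ∈ F such that r·s^{p^ℓ}·A_{ii} + s·r^{p^ℓ}·A_{ii}^{p^ℓ} + r·t^{p^ℓ}·ρ_i + t·r^{p^ℓ}·ρ_i^{p^ℓ} = δ for every i; suppose a := s^{p^ℓ+1} − r^{p^ℓ+1} + s·t^{p^ℓ} + t·s^{p^ℓ} + n·t^{p^ℓ+1} + δ is nonzero (where n denotes the image of the natural number n in F); and suppose that for all i ≠ j, r·s^{p^ℓ}·A_{ij} + s·r^{p^ℓ}·A_{ji}^{p^ℓ} + r·t^{p^ℓ}·ρ_i + t·r^{p^ℓ}·ρ_j^{p^ℓ} + s·t^{p^ℓ} + t·s^{p^ℓ} + n·t^{p^ℓ+1} = 0 or r·s^{p^ℓ}·A_{ji} + s·r^{p^ℓ}·A_{ij}^{p^ℓ}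 + r·t^{p^ℓ}·ρ_j + t·r^{p^ℓ}·ρ_i^{p^ℓ} + s·t^{p^ℓ} + t·s^{p^ℓ} + n·t^{p^ℓ+1} = 0. Then G_{ii} = a for every i and G_{ij}·G_{ji} = 0 for all i ≠ j; that is, G has the diagonal and equiangularity structure of the ℓ-Galois Gram matrix of an (a, 0, a)_ℓ-equiangular tight frame for F^n. -/
/-!
Write `σ` for the Frobenius power `x ↦ x ^ p ^ ℓ`, a ring endomorphism of `F`, and `J` for the
all-ones matrix. Expanding `G = M·σ(M)ᵗ` bilinearly and substituting `A·σ(A)ᵗ = -1`, `A·J = (ρ_i)`,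
`J·σ(A)ᵗ = (σ ρ_j)` and `J·J = n·J` gives
`G_ij = [i = j]·(s·σ s - r·σ r) + (r·σ s·A_ij + s·σ r·σ A_ji + r·σ t·ρ_i + t·σ r·σ ρ_j + s·σ t + t·σ s + n·t·σ t)`.
On the diagonal this is `a` by the choice of `δ`; off the diagonal the hypothesis says that
`G_ij` or `G_ji` vanishes.
-/

open Matrix BigOperators

namespace Matrix

variable {R ι : Type*} [CommRing R] [Fintype ι] [DecidableEq ι] (σ : R →+* R)

def galoisGram (M : Matrix ι ι R) : Matrix ι ι R := M * (M.map σ)ᵀ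

theorem galoisGram_affine (A : Matrix ι ι R) (r s t : R) :
    galoisGram σ (r • A + s • 1 + t • of fun _ _ => 1) =
      (r * σ r) • galoisGram σ A + (s * σ s) • 1 + (r * σ s) • A + (s * σ r) • (A.map σ)ᵀ +
        (r * σ t) • (A * of fun _ _ => 1) + (t * σ r) • ((of fun _ _ => 1) * (A.map σ)ᵀ) +
        (s * σ t + t * σ s) • (of fun _ _ => 1) +
        (t * σ t) • ((of fun _ _ => 1) * of fun _ _ => 1) := by
  have hmap : (r • A + s • 1 + t • of fun _ _ => 1).map σ =
      σ r • A.map σ + σ s • 1 + σ t • of fun _ _ => 1 := by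
    ext i j
    by_cases h : i = j <;> simp [h]
  have hJ : (of fun _ _ => (1 : R) : Matrix ι ι R)ᵀ = of fun _ _ => 1 := rfl
  rw [galoisGram, galoisGram, hmap]
  simp only [transpose_add, transpose_smul, transpose_one, hJ, Matrix.add_mul, Matrix.mul_add,
    Matrix.smul_mul, Matrix.mul_smul, Matrix.one_mul, Matrix.mul_one]
  module

theorem galoisGram_affine_apply {A : Matrix ι ι R} (hA : galoisGram σ A = -1) (r s t : R)
    (i j : ι) :
    galoisGram σ (r • A + s • 1 + t • of fun _ _ => 1) i j =
      (if i = j then s * σ s - r * σ r else 0) +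
        (r * σ s * A i j + s * σ r * σ (A j i) + r * σ t * ∑ k, A i k +
          t * σ r * σ (∑ k, A j k) + s * σ t + t * σ s + Fintype.card ι * (t * σ t)) := by
  rw [galoisGram_affine, hA]
  simp only [smul_of, add_apply, smul_apply, smul_eq_mul, transpose_apply, map_apply, mul_apply,
    of_apply, mul_one, one_mul, Pi.smul_apply, Finset.sum_const, Finset.card_univ, nsmul_eq_mul,
    map_sum, neg_apply, one_apply]
  split_ifs <;> ring

end Matrix

theorem case_vi_etf_general (p e ℓ n : ℕ) (hp : p.Prime)
    (F : Type) [Field F] [Fintype F] (hcard : Fintype.card F = p ^ e)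
    (A : Matrix (Fin n) (Fin n) F)
    (hA : A * (A.map fun x => x ^ p ^ ℓ)ᵀ = -1)
    (r s t : F)
    (M G : Matrix (Fin n) (Fin n) F)
    (hM : M = r • A + s • (1 : Matrix (Fin n) (Fin n) F) + t • Matrix.of (fun _ _ => (1 : F)))
    (hG : G = M * (M.map fun x => x ^ p ^ ℓ)ᵀ)
    (ρ : Fin n → F) (hρ : ∀ i, ρ i = ∑ k, A i k)
    (δ : F)
    (hδ : ∀ i, r * s ^ p ^ ℓ * A i i + s * r ^ p ^ ℓ * (A i i) ^ p ^ ℓ +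
      r * t ^ p ^ ℓ * ρ i + t * r ^ p ^ ℓ * (ρ i) ^ p ^ ℓ = δ)
    (a : F)
    (haval : a = s ^ (p ^ ℓ + 1) - r ^ (p ^ ℓ + 1) + s * t ^ p ^ ℓ + t * s ^ p ^ ℓ +
      (n : F) * t ^ (p ^ ℓ + 1) + δ)
    (hoff : ∀ i j, i ≠ j →
      r * s ^ p ^ ℓ * A i j + s * r ^ p ^ ℓ * (A j i) ^ p ^ ℓ +
          r * t ^ p ^ ℓ * ρ i + t * r ^ p ^ ℓ * (ρ j) ^ p ^ ℓ +
          s * t ^ p ^ ℓ + t * s ^ p ^ ℓ + (n : F) * t ^ (p ^ ℓ + 1) = 0 ∨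
      r * s ^ p ^ ℓ * A j i + s * r ^ p ^ ℓ * (A i j) ^ p ^ ℓ +
          r * t ^ p ^ ℓ * ρ j + t * r ^ p ^ ℓ * (ρ i) ^ p ^ ℓ +
          s * t ^ p ^ ℓ + t * s ^ p ^ ℓ + (n : F) * t ^ (p ^ ℓ + 1) = 0) :
    (∀ i, G i i = a) ∧ ∀ i j, i ≠ j → G i j * G j i = 0 := by
  have : Fact p.Prime := ⟨hp⟩
  have : CharP F p := charP_of_card_eq_prime_pow hcard
  have hGM : G = galoisGram (iterateFrobenius F p ℓ) M := hG
  have hGij := galoisGram_affine_apply (iterateFrobenius F p ℓ) hA r s t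
  simp only [iterateFrobenius_def, ← hρ, ← hM, ← hGM, Fintype.card_fin] at hGij
  refine ⟨fun i => ?_, fun i j hij => ?_⟩
  · rw [hGij, if_pos rfl, haval]
    linear_combination hδ i
  · rw [hGij i j, hGij j i, if_neg hij, if_neg (Ne.symm hij), zero_add, zero_add]
    rcases hoff i j hij with h | h
    · exact mul_eq_zero_of_left (by linear_combination h) _
    · exact mul_eq_zero_of_right _ (by linear_combination h)

/-- Case (vi): let `A·A^{†_ℓ} = −I`, let `r, s, t` all be nonzero,
`M = r·A + s·I + t·J`, `G = M·M^{†_ℓ}` and `ρ_i = ∑ k, A_{ik}`. Under the stated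
conditions on `δ`, `a` and the off-diagonal entries, `G_{ii} = a` for all `i` and
`G_{ij}·G_{ji} = 0` for all `i ≠ j`. -/
theorem case_vi_etf (p e ℓ n : ℕ) (hp : p.Prime) (he : 1 ≤ e) (hℓ : ℓ ≤ e - 1)
    (F : Type) [Field F] [Fintype F] (hcard : Fintype.card F = p ^ e)
    (A : Matrix (Fin n) (Fin n) F)
    (hA : A * (A.map fun x => x ^ p ^ ℓ)ᵀ = -1)
    (r s t : F) (hr : r ≠ 0) (hs : s ≠ 0) (ht : t ≠ 0)
    (M G : Matrix (Fin n) (Fin n) F)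
    (hM : M = r • A + s • (1 : Matrix (Fin n) (Fin n) F) + t • Matrix.of (fun _ _ => (1 : F)))
    (hG : G = M * (M.map fun x => x ^ p ^ ℓ)ᵀ)
    (ρ : Fin n → F) (hρ : ∀ i, ρ i = ∑ k, A i k)
    (δ : F)
    (hδ : ∀ i, r * s ^ p ^ ℓ * A i i + s * r ^ p ^ ℓ * (A i i) ^ p ^ ℓ +
      r * t ^ p ^ ℓ * ρ i + t * r ^ p ^ ℓ * (ρ i) ^ p ^ ℓ = δ)
    (a : F)
    (haval : a = s ^ (p ^ ℓ + 1) - r ^ (p ^ ℓ + 1) + s * t ^ p ^ ℓ + t * s ^ p ^ ℓ +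
      (n : F) * t ^ (p ^ ℓ + 1) + δ)
    (ha : a ≠ 0)
    (hoff : ∀ i j, i ≠ j →
      r * s ^ p ^ ℓ * A i j + s * r ^ p ^ ℓ * (A j i) ^ p ^ ℓ +
          r * t ^ p ^ ℓ * ρ i + t * r ^ p ^ ℓ * (ρ j) ^ p ^ ℓ +
          s * t ^ p ^ ℓ + t * s ^ p ^ ℓ + (n : F) * t ^ (p ^ ℓ + 1) = 0 ∨
      r * s ^ p ^ ℓ * A j i + s * r ^ p ^ ℓ * (A i j) ^ p ^ ℓ +
          r * t ^ p ^ ℓ * ρ j + t * r ^ p ^ ℓ * (ρ i) ^ p ^ ℓ +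
          s * t ^ p ^ ℓ + t * s ^ p ^ ℓ + (n : F) * t ^ (p ^ ℓ + 1) = 0) :
    (∀ i, G i i = a) ∧ ∀ i j, i ≠ j → G i j * G j i = 0 :=
  case_vi_etf_general p e ℓ n hp F hcard A hA r s t M G hM hG ρ hρ δ hδ a haval hoff
end
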